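/- arXiv:2601.09450 — 3 statements merged into one kernel-verified Lean document; each statement's English description precedes it below -/
import Mathlib

section
/- The linear-path fluctuations satisfy the entropy conservation condition: if q is an entropy flux with q_w(Φ) = Φᵀ M(Φ) (i.e., ∇_w q evaluated along the path equals the row vector wᵀ M(w)), then w_Lᵀ D⁻(u_L,u_R) + w_Rᵀ D⁺(u_L,u_R) = q(w_R) − q(w_L). -/
open MeasureTheory Matrix

theorem linear_path_fluctuation_entropy_conservation {n : ℕ}
    (M : (Fin n → ℝ) → Matrix (Fin n) (Fin n) ℝ) (hM : Continuous M)
    (q : (Fin n → ℝ) → ℝ) (hq : Differentiable ℝ q)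
    (hgrad : ∀ v y : Fin n → ℝ, fderiv ℝ q v y = Matrix.vecMul v (M v) ⬝ᵥ y)
    (wL wR : Fin n → ℝ) :
    wL ⬝ᵥ (∫ s in (0:ℝ)..1,
        (1 - s) • (M (wL + s • (wR - wL))).mulVec (wR - wL)) +
      wR ⬝ᵥ (∫ s in (0:ℝ)..1,
        s • (M (wL + s • (wR - wL))).mulVec (wR - wL)) =
      q wR - q wL := by
  set u : Fin n → ℝ := wR - wL with hu
  set Φ : ℝ → (Fin n → ℝ) := fun s => wL + s • u with hΦ
  have hΦc : Continuous Φ := by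
    apply continuous_const.add
    exact (continuous_id.smul continuous_const)
  have hfc : Continuous fun s => (M (Φ s)).mulVec u := by
    apply Continuous.matrix_mulVec
    · exact hM.comp hΦc
    · exact continuous_const
  have contdot : ∀ (g h : ℝ → Fin n → ℝ), Continuous g → Continuous h →
      Continuous fun s => g s ⬝ᵥ h s := by
    intro g h hg hh
    exact continuous_finset_sum _ fun i _ =>
      ((continuous_apply i).comp hg).mul ((continuous_apply i).comp hh)
  -- continuous linear maps for dot products
  have dotCLM : ∀ v : Fin n → ℝ, ∃ L : (Fin n → ℝ) →L[ℝ] ℝ,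
      ∀ y, L y = v ⬝ᵥ y := by
    intro v
    refine ⟨LinearMap.toContinuousLinearMap
      { toFun := fun y => v ⬝ᵥ y
        map_add' := fun a b => dotProduct_add v a b
        map_smul' := fun c a => by simp [dotProduct_smul] }, fun y => rfl⟩
  obtain ⟨LL, hLL⟩ := dotCLM wL
  obtain ⟨LR, hLR⟩ := dotCLM wR
  have hint1 : IntervalIntegrable
      (fun s => (1 - s) • (M (Φ s)).mulVec u) volume 0 1 :=
    (((continuous_const.sub continuous_id).smul hfc)).intervalIntegrable 0 1
  have hint2 : IntervalIntegrable
      (fun s => s • (M (Φ s)).mulVec u) volume 0 1 :=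
    ((continuous_id.smul hfc)).intervalIntegrable 0 1
  have e1 : wL ⬝ᵥ (∫ s in (0:ℝ)..1, (1 - s) • (M (Φ s)).mulVec u)
      = ∫ s in (0:ℝ)..1, wL ⬝ᵥ ((1 - s) • (M (Φ s)).mulVec u) := by
    rw [← hLL]
    rw [← LL.intervalIntegral_comp_comm hint1]
    simp [hLL]
  have e2 : wR ⬝ᵥ (∫ s in (0:ℝ)..1, s • (M (Φ s)).mulVec u)
      = ∫ s in (0:ℝ)..1, wR ⬝ᵥ (s • (M (Φ s)).mulVec u) := by
    rw [← hLR]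
    rw [← LR.intervalIntegral_comp_comm hint2]
    simp [hLR]
  have hderiv : ∀ s : ℝ, HasDerivAt (fun t => q (Φ t))
      (Φ s ⬝ᵥ (M (Φ s)).mulVec u) s := by
    intro s
    have hΦd : HasDerivAt Φ u s := by
      simpa [hΦ] using ((hasDerivAt_id s).smul_const u).const_add wL
    have := ((hq (Φ s)).hasFDerivAt).comp_hasDerivAt s hΦd
    have h2 : fderiv ℝ q (Φ s) u = Φ s ⬝ᵥ (M (Φ s)).mulVec u := by
      rw [hgrad, dotProduct_mulVec]
    rw [h2] at this
    exact this
  have hcint : IntervalIntegrable (fun s => Φ s ⬝ᵥ (M (Φ s)).mulVec u)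
      volume 0 1 := by
    apply Continuous.intervalIntegrable
    exact contdot _ _ hΦc hfc
  have ftc : (∫ s in (0:ℝ)..1, Φ s ⬝ᵥ (M (Φ s)).mulVec u)
      = q (Φ 1) - q (Φ 0) :=
    intervalIntegral.integral_eq_sub_of_hasDerivAt
      (fun s _ => hderiv s) hcint
  rw [show (fun s : ℝ => (M (wL + s • (wR - wL))).mulVec (wR - wL))
      = fun s => (M (Φ s)).mulVec u from rfl] at *
  have h1 : IntervalIntegrable (fun s => wL ⬝ᵥ ((1 - s) • (M (Φ s)).mulVec u))
      volume 0 1 :=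
    (contdot _ _ continuous_const
      ((continuous_const.sub continuous_id).smul hfc)).intervalIntegrable 0 1
  have h2 : IntervalIntegrable (fun s => wR ⬝ᵥ (s • (M (Φ s)).mulVec u))
      volume 0 1 :=
    (contdot _ _ continuous_const (continuous_id.smul hfc)).intervalIntegrable 0 1
  rw [e1, e2, ← intervalIntegral.integral_add h1 h2]
  have hpt : ∀ s : ℝ, wL ⬝ᵥ ((1 - s) • (M (Φ s)).mulVec u)
      + wR ⬝ᵥ (s • (M (Φ s)).mulVec u) = Φ s ⬝ᵥ (M (Φ s)).mulVec u := by
    intro s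
    rw [dotProduct_smul, dotProduct_smul, ← smul_dotProduct, ← smul_dotProduct,
      ← add_dotProduct]
    congr 1
    funext i
    simp [hΦ, hu, Pi.smul_apply, Pi.sub_apply]
    ring
  rw [intervalIntegral.integral_congr (fun s _ => hpt s), ftc]
  simp [hΦ, hu]
end

section
/- For a conservative system with flux f and strictly convex entropy S satisfying q_u = S_uᵀ f_u, the matrix f_u(u)·H(u) is symmetric, where H(u) = (S_{uu}(u))⁻¹. -/
open Matrix

theorem flux_jacobian_right_symmetrized_by_entropy_hessian_inverse {n : ℕ}
    (f : (Fin n → ℝ) → (Fin n → ℝ)) (S q : (Fin n → ℝ) → ℝ)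
    (w : (Fin n → ℝ) → (Fin n → ℝ))
    (Df Huu : (Fin n → ℝ) → Matrix (Fin n) (Fin n) ℝ)
    (hf : ContDiff ℝ (⊤ : ℕ∞) f) (hS : ContDiff ℝ (⊤ : ℕ∞) S) (hqq : ContDiff ℝ (⊤ : ℕ∞) q)
    (hSconv : StrictConvexOn ℝ Set.univ S)
    (hw : ∀ u y, fderiv ℝ S u y = w u ⬝ᵥ y)
    (hDf : ∀ u y, fderiv ℝ f u y = (Df u).mulVec y)
    (hHess : ∀ u y, fderiv ℝ w u y = (Huu u).mulVec y)
    (hpos : ∀ u, (Huu u).PosDef)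
    (hcompat : ∀ u y, fderiv ℝ q u y = w u ⬝ᵥ (Df u).mulVec y) :
    ∀ u, (Df u * (Huu u)⁻¹).IsSymm := by
  intro u
  classical
  -- w is smooth, since it is the gradient of the smooth function S
  have hweq : w = fun v i => fderiv ℝ S v (Pi.single i 1) := by
    funext v i
    rw [hw]
    simp [dotProduct, Pi.single_apply, mul_ite]
  have hwc : ContDiff ℝ (⊤ : ℕ∞) w := by
    rw [hweq]
    exact contDiff_pi.2 fun i => (hS.fderiv_right (by simp)).clm_apply contDiff_const
  -- the Hessian as a continuous linear map
  set Hclm : (Fin n → ℝ) →L[ℝ] (Fin n → ℝ) :=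
    LinearMap.toContinuousLinearMap ((Huu u).mulVecLin) with hHclm
  have hHclm_apply : ∀ y, Hclm y = (Huu u).mulVec y := fun y => rfl
  have h1 : HasFDerivAt w Hclm u := by
    have h0 := ((hwc.differentiable (by simp)) u).hasFDerivAt
    have he : fderiv ℝ w u = Hclm := ContinuousLinearMap.ext fun y => by
      rw [hHess u y, hHclm_apply]
    rwa [he] at h0
  -- the derivative of f and its second derivative
  set F := fderiv ℝ f with hF
  have hFc : ContDiff ℝ (⊤ : ℕ∞) F := hf.fderiv_right (by simp)
  have hFd : DifferentiableAt ℝ F u := (hFc.differentiable (by simp)) u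
  set G := fderiv ℝ F u with hG
  have hGsymm : ∀ z y, G z y = G y z :=
    second_derivative_symmetric (fun y => ((hf.differentiable (by simp)) y).hasFDerivAt)
      hFd.hasFDerivAt
  -- component derivatives
  have hwk : ∀ k, ∀ z : Fin n → ℝ, fderiv ℝ (fun v => w v k) u z = (Huu u).mulVec z k := by
    intro k z
    have := ((ContinuousLinearMap.proj (R := ℝ) (φ := fun _ : Fin n => ℝ) k).hasFDerivAt.comp
      u h1).fderiv
    rw [show (fun v => w v k) = ⇑(ContinuousLinearMap.proj (R := ℝ) (φ := fun _ : Fin n => ℝ) k) ∘ w from rfl, this]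
    rfl
  have hFk : ∀ (y : Fin n → ℝ) k, ∀ z : Fin n → ℝ,
      fderiv ℝ (fun v => F v y k) u z = G z y k := by
    intro y k z
    set L : ((Fin n → ℝ) →L[ℝ] (Fin n → ℝ)) →L[ℝ] ℝ :=
      (ContinuousLinearMap.proj (R := ℝ) (φ := fun _ : Fin n => ℝ) k).comp
        (ContinuousLinearMap.apply ℝ (Fin n → ℝ) y) with hL
    have := (L.hasFDerivAt.comp u hFd.hasFDerivAt).fderiv
    rw [show (fun v => F v y k) = L ∘ F from rfl, this]
    rfl
  -- differentiability of components
  have hwdk : ∀ k, DifferentiableAt ℝ (fun v => w v k) u := fun k =>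
    ((ContinuousLinearMap.proj (R := ℝ) (φ := fun _ : Fin n => ℝ) k).hasFDerivAt.comp
      u h1).differentiableAt
  have hFdk : ∀ (y : Fin n → ℝ) k, DifferentiableAt ℝ (fun v => F v y k) u := by
    intro y k
    set L : ((Fin n → ℝ) →L[ℝ] (Fin n → ℝ)) →L[ℝ] ℝ :=
      (ContinuousLinearMap.proj (R := ℝ) (φ := fun _ : Fin n => ℝ) k).comp
        (ContinuousLinearMap.apply ℝ (Fin n → ℝ) y) with hL
    exact (L.hasFDerivAt.comp u hFd.hasFDerivAt).differentiableAt
  -- the first derivative of q, rewritten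
  have hqd : ∀ (y : Fin n → ℝ), (fun v => fderiv ℝ q v y)
      = fun v => ∑ k, w v k * F v y k := by
    intro y
    funext v
    rw [hcompat v y]
    have : (Df v).mulVec y = F v y := (hDf v y).symm
    rw [← this]
    rfl
  -- compute the second derivative of q
  have hkey : ∀ y z : Fin n → ℝ, fderiv ℝ (fderiv ℝ q) u z y
      = ∑ k, ((Huu u).mulVec z k * F u y k + w u k * G z y k) := by
    intro y z
    have hdq : DifferentiableAt ℝ (fderiv ℝ q) u :=
      ((hqq.fderiv_right (m := (⊤ : ℕ∞)) (by simp)).differentiable (by simp)) u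
    have e1 : fderiv ℝ (fun v => fderiv ℝ q v y) u z = fderiv ℝ (fderiv ℝ q) u z y := by
      rw [fderiv_clm_apply hdq (differentiableAt_const y)]
      simp
    rw [← e1, hqd y]
    have hdiff : ∀ k ∈ Finset.univ, DifferentiableAt ℝ (fun v => w v k * F v y k) u :=
      fun k _ => (hwdk k).mul (hFdk y k)
    rw [fderiv_fun_sum hdiff]
    rw [ContinuousLinearMap.sum_apply]
    refine Finset.sum_congr rfl fun k _ => ?_
    rw [fderiv_fun_mul (hwdk k) (hFdk y k)]
    simp only [ContinuousLinearMap.add_apply, ContinuousLinearMap.smul_apply, smul_eq_mul]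
    rw [hwk k z, hFk y k z]
    ring
  -- symmetry of second derivative of q
  have hqsymm : IsSymmSndFDerivAt ℝ q u :=
    hqq.contDiffAt.isSymmSndFDerivAt (by simp [minSmoothness_of_isRCLikeNormedField]; exact WithTop.coe_le_coe.2 (le_top : (2 : ℕ∞) ≤ ⊤))
  -- main symmetry identity
  have hmain : ∀ y z : Fin n → ℝ,
      (Huu u).mulVec z ⬝ᵥ F u y = (Huu u).mulVec y ⬝ᵥ F u z := by
    intro y z
    have h2 := hqsymm z y
    rw [hkey y z, hkey z y] at h2
    have h3 : ∑ k, (Huu u).mulVec z k * F u y k + ∑ k, w u k * G z y k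
        = ∑ k, (Huu u).mulVec y k * F u z k + ∑ k, w u k * G y z k := by
      rw [← Finset.sum_add_distrib, ← Finset.sum_add_distrib]
      exact h2
    have h4 : ∑ k, w u k * G z y k = ∑ k, w u k * G y z k := by
      refine Finset.sum_congr rfl fun k _ => ?_
      rw [hGsymm z y]
    rw [h4] at h3
    have h5 := add_right_cancel h3
    exact h5
  -- translate to matrices: Huuᵀ * Df = (Huuᵀ * Df)ᵀ, with Huu symmetric
  have hHsym : (Huu u)ᵀ = Huu u := by
    have := (hpos u).isHermitian
    ext i j; simpa using this.apply i j
  have hDfF : ∀ y, (Df u).mulVec y = F u y := fun y => (hDf u y).symm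
  have hMDf : Huu u * Df u = (Df u)ᵀ * Huu u := by
    ext i j
    have := hmain (Pi.single j 1) (Pi.single i 1)
    rw [← hDfF, ← hDfF] at this
    simp only [Matrix.mulVec_single, mul_one] at this
    have lhs : (Huu u * Df u) i j = ∑ k, Huu u i k * Df u k j := rfl
    have rhs : ((Df u)ᵀ * Huu u) i j = ∑ k, Df u k i * Huu u k j := rfl
    rw [lhs, rhs]
    calc ∑ k, Huu u i k * Df u k j
        = ∑ k, (fun k => Huu u k i) k * (fun k => Df u k j) k := by
          refine Finset.sum_congr rfl fun k _ => ?_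
          have : Huu u i k = Huu u k i := by
            conv_lhs => rw [← hHsym]
            rfl
          rw [this]
      _ = (fun k => Huu u k i) ⬝ᵥ (fun k => Df u k j) := rfl
      _ = (fun k => Huu u k j) ⬝ᵥ (fun k => Df u k i) := by
          simpa [Matrix.replicateCol, dotProduct] using this
      _ = ∑ k, Df u k i * Huu u k j := by
          simp [dotProduct, mul_comm]
  -- invertibility
  have hdet : IsUnit (Huu u).det := isUnit_iff_ne_zero.2 (ne_of_gt (hpos u).det_pos)
  have hinv : Df u * (Huu u)⁻¹ = (Huu u)⁻¹ * (Df u)ᵀ := by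
    calc Df u * (Huu u)⁻¹
        = ((Huu u)⁻¹ * (Huu u * Df u)) * (Huu u)⁻¹ := by
          rw [← Matrix.mul_assoc ((Huu u)⁻¹) (Huu u) (Df u),
            Matrix.nonsing_inv_mul _ hdet, Matrix.one_mul]
      _ = ((Huu u)⁻¹ * ((Df u)ᵀ * Huu u)) * (Huu u)⁻¹ := by rw [hMDf]
      _ = (Huu u)⁻¹ * (Df u)ᵀ := by
          simp only [Matrix.mul_assoc]
          rw [Matrix.mul_nonsing_inv _ hdet, Matrix.mul_one]
  -- conclude
  unfold Matrix.IsSymm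
  rw [Matrix.transpose_mul, Matrix.transpose_nonsing_inv, hHsym, hinv]
end

section
/- For the Saint-Venant-Exner EC fluctuation, under lake-at-rest conditions (hv = 0, h + b constant, h_b = 0, q_b = 0) the fluctuations D±_EC(u_L,u_R) = B̄±⟦v⟧ ± (f± − f*) with f* = (⟨hv⟩, ⟨hv⟩⟨v⟩, ⟨q_b⟩)ᵀ, B̄⁻ = ½B(u_L), B̄⁺ = ½B(u_R), and B(u) having single nonzero row (g(h+h_b), 0, g(h + h_b/r)), vanish identically: the momentum component reduces to (g/2) h_{L,R} ⟦h + b⟧ = 0 and all other components are zero. -/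
open Matrix

noncomputable section

namespace SaintVenantExner

variable (g r : ℝ) (qb hb : (Fin 3 → ℝ) → ℝ)

def flux (u : Fin 3 → ℝ) : Fin 3 → ℝ := ![u 1, u 1 * (u 1 / u 0), qb u]

def nonconsMatrix (u : Fin 3 → ℝ) : Matrix (Fin 3) (Fin 3) ℝ :=
  Matrix.of ![![0, 0, 0], ![g * (u 0 + hb u), 0, g * (u 0 + hb u / r)], ![0, 0, 0]]

def auxVars (u : Fin 3 → ℝ) : Fin 3 → ℝ := ![u 0, hb u, u 2]

def centralFlux (a b : Fin 3 → ℝ) : Fin 3 → ℝ :=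
  ![(a 1 + b 1) / 2, ((a 1 + b 1) / 2) * ((a 1 / a 0 + b 1 / b 0) / 2), (qb a + qb b) / 2]

variable {qb hb}

theorem flux_eq_zero {u : Fin 3 → ℝ} (hmom : u 1 = 0) (hq : qb u = 0) : flux qb u = 0 := by
  ext i; fin_cases i <;> simp [flux, hmom, hq]

theorem centralFlux_eq_zero {uL uR : Fin 3 → ℝ} (hmomL : uL 1 = 0) (hmomR : uR 1 = 0)
    (hqL : qb uL = 0) (hqR : qb uR = 0) : centralFlux qb uL uR = 0 := by
  ext i; fin_cases i <;> simp [centralFlux, hmomL, hmomR, hqL, hqR]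

theorem nonconsMatrix_mulVec (u w : Fin 3 → ℝ) :
    nonconsMatrix g r hb u *ᵥ w =
      ![0, g * (u 0 + hb u) * w 0 + g * (u 0 + hb u / r) * w 2, 0] := by
  ext i; fin_cases i <;> simp [nonconsMatrix, mulVec, dotProduct, Fin.sum_univ_three]

theorem auxVars_sub {uL uR : Fin 3 → ℝ} (hbL : hb uL = 0) (hbR : hb uR = 0) :
    auxVars hb uR - auxVars hb uL = ![uR 0 - uL 0, 0, uR 2 - uL 2] := by
  ext i; fin_cases i <;> simp [auxVars, hbL, hbR]

/-- At rest the momentum row reduces to `g h ⟦h + b⟧`, which vanishes for a flat free surface. -/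
theorem nonconsMatrix_mulVec_auxVars_jump_eq_zero {u uL uR : Fin 3 → ℝ} (hbu : hb u = 0)
    (hbL : hb uL = 0) (hbR : hb uR = 0) (hlevel : uL 0 + uL 2 = uR 0 + uR 2) :
    nonconsMatrix g r hb u *ᵥ (auxVars hb uR - auxVars hb uL) = 0 := by
  have hjump : uR 0 - uL 0 + (uR 2 - uL 2) = 0 := by linarith
  rw [auxVars_sub hbL hbR, nonconsMatrix_mulVec, hbu, zero_div, add_zero, ← mul_add]
  simp [hjump]

end SaintVenantExner

end

open SaintVenantExner in
theorem sve_ec_fluctuation_well_balanced_general (g r : ℝ)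
    (qb hb : (Fin 3 → ℝ) → ℝ)
    -- SVE flux, nonconservative matrix, auxiliary variables, central flux
    (f : (Fin 3 → ℝ) → (Fin 3 → ℝ))
    (hf : ∀ u, f u = ![u 1, u 1 * (u 1 / u 0), qb u])
    (B : (Fin 3 → ℝ) → Matrix (Fin 3) (Fin 3) ℝ)
    (hB : ∀ u, B u = Matrix.of
      ![![0, 0, 0], ![g * (u 0 + hb u), 0, g * (u 0 + hb u / r)], ![0, 0, 0]])
    (vmap : (Fin 3 → ℝ) → (Fin 3 → ℝ))
    (hv : ∀ u, vmap u = ![u 0, hb u, u 2])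
    (fstar : (Fin 3 → ℝ) → (Fin 3 → ℝ) → (Fin 3 → ℝ))
    (hfstar : ∀ a b, fstar a b =
      ![(a 1 + b 1) / 2, ((a 1 + b 1) / 2) * ((a 1 / a 0 + b 1 / b 0) / 2),
        (qb a + qb b) / 2])
    -- lake-at-rest conditions
    (uL uR : Fin 3 → ℝ)
    (hmomL : uL 1 = 0) (hmomR : uR 1 = 0)
    (hlevel : uL 0 + uL 2 = uR 0 + uR 2)
    (hhbL : hb uL = 0) (hhbR : hb uR = 0)
    (hqbL : qb uL = 0) (hqbR : qb uR = 0) :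
    ((1 / 2 : ℝ) • B uL).mulVec (vmap uR - vmap uL) -
        (f uL - fstar uL uR) = 0 ∧
    ((1 / 2 : ℝ) • B uR).mulVec (vmap uR - vmap uL) +
        (f uR - fstar uL uR) = 0 := by
  obtain rfl : f = flux qb := funext hf
  obtain rfl : B = nonconsMatrix g r hb := funext hB
  obtain rfl : vmap = auxVars hb := funext hv
  obtain rfl : fstar = centralFlux qb := funext₂ hfstar
  have hcentral := centralFlux_eq_zero hmomL hmomR hqbL hqbR
  have hjumpL := nonconsMatrix_mulVec_auxVars_jump_eq_zero g r hhbL hhbL hhbR hlevel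
  have hjumpR := nonconsMatrix_mulVec_auxVars_jump_eq_zero g r hhbR hhbL hhbR hlevel
  simp [smul_mulVec, hjumpL, hjumpR, hcentral, flux_eq_zero hmomL hqbL, flux_eq_zero hmomR hqbR]

theorem sve_ec_fluctuation_well_balanced (g r : ℝ) (hr : r ≠ 0)
    (qb hb : (Fin 3 → ℝ) → ℝ)
    -- SVE flux, nonconservative matrix, auxiliary variables, central flux
    (f : (Fin 3 → ℝ) → (Fin 3 → ℝ))
    (hf : ∀ u, f u = ![u 1, u 1 * (u 1 / u 0), qb u])
    (B : (Fin 3 → ℝ) → Matrix (Fin 3) (Fin 3) ℝ)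
    (hB : ∀ u, B u = Matrix.of
      ![![0, 0, 0], ![g * (u 0 + hb u), 0, g * (u 0 + hb u / r)], ![0, 0, 0]])
    (vmap : (Fin 3 → ℝ) → (Fin 3 → ℝ))
    (hv : ∀ u, vmap u = ![u 0, hb u, u 2])
    (fstar : (Fin 3 → ℝ) → (Fin 3 → ℝ) → (Fin 3 → ℝ))
    (hfstar : ∀ a b, fstar a b =
      ![(a 1 + b 1) / 2, ((a 1 + b 1) / 2) * ((a 1 / a 0 + b 1 / b 0) / 2),
        (qb a + qb b) / 2])
    -- lake-at-rest conditions
    (uL uR : Fin 3 → ℝ)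
    (hmomL : uL 1 = 0) (hmomR : uR 1 = 0)
    (hlevel : uL 0 + uL 2 = uR 0 + uR 2)
    (hhbL : hb uL = 0) (hhbR : hb uR = 0)
    (hqbL : qb uL = 0) (hqbR : qb uR = 0) :
    ((1 / 2 : ℝ) • B uL).mulVec (vmap uR - vmap uL) -
        (f uL - fstar uL uR) = 0 ∧
    ((1 / 2 : ℝ) • B uR).mulVec (vmap uR - vmap uL) +
        (f uR - fstar uL uR) = 0 :=
  sve_ec_fluctuation_well_balanced_general g r qb hb f hf B hB vmap hv fstar hfstar uL uR hmomL
    hmomR hlevel hhbL hhbR hqbL hqbR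
end
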